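/- arXiv:2301.05692 — 4 statements merged into one kernel-verified Lean document; each statement's English description precedes it below -/
import Mathlib

section
/- Let A, B, D be unital C*-algebras, let π_A : A → D and π_B : B → D be unital *-homomorphisms, let C ≥ 1, let ε > 0, and let L_A and L_B be [0,∞]-valued seminorms on the self-adjoint parts of A and B respectively, each of which is C-strongly Leibniz. Define, for every self-adjoint (a,b) in the direct sum C*-algebra A ⊕ B, T(a,b) = max{ L_A(a), L_B(b), (1/ε)·‖π_A(a) − π_B(b)‖_D }. Then T is C-strongly Leibniz on A ⊕ B: for every self-adjoint invertible element (a,b) of A ⊕ B, T((a,b)⁻¹) ≤ C · ‖(a,b)⁻¹‖_{A⊕B}² · T(a,b). -/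
/-!
Each of the three terms of `T` is `C`-strongly Leibniz on `A × B`. For `L_A` and `L_B` this is
because the coordinate projections are *-homomorphisms, which preserve inverses and, between
C*-algebras, do not increase norms. For the distance term it is the resolvent identity
`x⁻¹ - y⁻¹ = x⁻¹ (y - x) y⁻¹` in `D`, applied to `x = π_A a`, `y = π_B b`, which gives
`‖π_A a⁻¹ - π_B b⁻¹‖ ≤ ‖a⁻¹‖ ‖b⁻¹‖ ‖π_A a - π_B b‖ ≤ C ‖(a, b)⁻¹‖² ‖π_A a - π_B b‖`
as `C ≥ 1`.
A maximum of `C`-strongly Leibniz functions is again `C`-strongly Leibniz.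
-/

open scoped ENNReal

/-- A `[0,∞]`-valued seminorm `L` on the self-adjoint part of a unital C*-algebra `A` is
`C`-strongly Leibniz if for every self-adjoint invertible `a ∈ A` one has
`L(a⁻¹) ≤ C‖a⁻¹‖² L(a)`. -/
def StronglyLeibniz {A : Type*} [Ring A] [Norm A] [Star A] (C : ℝ) (L : A → ℝ≥0∞) : Prop :=
  ∀ a : A, IsSelfAdjoint a → IsUnit a →
    L (Ring.inverse a) ≤ ENNReal.ofReal (C * ‖Ring.inverse a‖ ^ 2) * L a

open scoped Ring

theorem map_ring_inverse {F M N : Type*} [MonoidWithZero M] [MonoidWithZero N] [FunLike F M N]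
    [MonoidHomClass F M N] (f : F) {a : M} (ha : IsUnit a) : f a⁻¹ʳ = (f a)⁻¹ʳ := by
  obtain ⟨u, rfl⟩ := ha
  rw [Ring.inverse_unit]
  exact (Ring.inverse_unit (Units.map (f : M →* N) u)).symm

theorem norm_ring_inverse_sub_ring_inverse_le {R : Type*} [SeminormedRing R] {x y : R}
    (h : IsUnit x ↔ IsUnit y) : ‖x⁻¹ʳ - y⁻¹ʳ‖ ≤ ‖x⁻¹ʳ‖ * ‖y⁻¹ʳ‖ * ‖x - y‖ := by
  rw [Ring.inverse_sub_inverse h, norm_sub_rev x y]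
  calc ‖x⁻¹ʳ * (y - x) * y⁻¹ʳ‖ ≤ ‖x⁻¹ʳ‖ * ‖y - x‖ * ‖y⁻¹ʳ‖ := norm_mul₃_le
    _ = ‖x⁻¹ʳ‖ * ‖y⁻¹ʳ‖ * ‖y - x‖ := by ring

namespace StronglyLeibniz

variable {C : ℝ}

theorem max {A : Type*} [Ring A] [Norm A] [Star A] {L₁ L₂ : A → ℝ≥0∞}
    (h₁ : StronglyLeibniz C L₁) (h₂ : StronglyLeibniz C L₂) :
    StronglyLeibniz C (fun a => max (L₁ a) (L₂ a)) := fun a ha hu => by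
  rw [mul_max]
  exact max_le_max (h₁ a ha hu) (h₂ a ha hu)

theorem comp {A B : Type*} [CStarAlgebra A] [CStarAlgebra B] {L : B → ℝ≥0∞}
    (hL : StronglyLeibniz C L) (hC : 0 ≤ C) (φ : A →⋆ₐ[ℂ] B) : StronglyLeibniz C (L ∘ φ) := by
  intro a ha hu
  have hinv : φ a⁻¹ʳ = (φ a)⁻¹ʳ := map_ring_inverse φ hu
  calc L (φ a⁻¹ʳ) = L (φ a)⁻¹ʳ := by rw [hinv]
    _ ≤ ENNReal.ofReal (C * ‖(φ a)⁻¹ʳ‖ ^ 2) * L (φ a) := hL _ (ha.map φ) (hu.map φ)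
    _ ≤ ENNReal.ofReal (C * ‖a⁻¹ʳ‖ ^ 2) * L (φ a) := by
      rw [← hinv]
      gcongr
      exact NonUnitalStarAlgHom.norm_apply_le φ _

end StronglyLeibniz

theorem stronglyLeibniz_ofReal_mul_norm_sub {A B D : Type*} [CStarAlgebra A] [CStarAlgebra B]
    [CStarAlgebra D] (πA : A →⋆ₐ[ℂ] D) (πB : B →⋆ₐ[ℂ] D) {C : ℝ} (hC : 1 ≤ C) (c : ℝ) :
    StronglyLeibniz C (fun p : A × B => ENNReal.ofReal (c * ‖πA p.1 - πB p.2‖)) := by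
  intro p _ hu
  set q := p⁻¹ʳ
  have hu₁ : IsUnit p.1 := hu.map (RingHom.fst A B)
  have hu₂ : IsUnit p.2 := hu.map (RingHom.snd A B)
  have hq₁ : πA q.1 = (πA p.1)⁻¹ʳ := by
    rw [← map_ring_inverse πA hu₁]
    exact congrArg πA (map_ring_inverse (RingHom.fst A B) hu)
  have hq₂ : πB q.2 = (πB p.2)⁻¹ʳ := by
    rw [← map_ring_inverse πB hu₂]
    exact congrArg πB (map_ring_inverse (RingHom.snd A B) hu)
  have hnorm : ‖πA q.1 - πB q.2‖ ≤ C * ‖q‖ ^ 2 * ‖πA p.1 - πB p.2‖ := calc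
    ‖πA q.1 - πB q.2‖ ≤ ‖πA q.1‖ * ‖πB q.2‖ * ‖πA p.1 - πB p.2‖ := by
      rw [hq₁, hq₂]
      exact norm_ring_inverse_sub_ring_inverse_le (iff_of_true (hu₁.map πA) (hu₂.map πB))
    _ ≤ ‖q‖ * ‖q‖ * ‖πA p.1 - πB p.2‖ := by
      gcongr
      · exact (NonUnitalStarAlgHom.norm_apply_le πA _).trans (norm_fst_le q)
      · exact (NonUnitalStarAlgHom.norm_apply_le πB _).trans (norm_snd_le q)
    _ ≤ C * ‖q‖ ^ 2 * ‖πA p.1 - πB p.2‖ := by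
      rw [← sq]
      gcongr
      exact le_mul_of_one_le_left (by positivity) hC
  calc ENNReal.ofReal (c * ‖πA q.1 - πB q.2‖)
      = ENNReal.ofReal c * ENNReal.ofReal ‖πA q.1 - πB q.2‖ := ENNReal.ofReal_mul' (norm_nonneg _)
    _ ≤ ENNReal.ofReal c * ENNReal.ofReal (C * ‖q‖ ^ 2 * ‖πA p.1 - πB p.2‖) := by gcongr
    _ = ENNReal.ofReal (C * ‖q‖ ^ 2) * ENNReal.ofReal (c * ‖πA p.1 - πB p.2‖) := by
      rw [ENNReal.ofReal_mul (by positivity), ENNReal.ofReal_mul' (norm_nonneg _)]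
      ring

theorem stmt0_general {A B D : Type*} [CStarAlgebra A] [CStarAlgebra B] [CStarAlgebra D]
    (πA : A →⋆ₐ[ℂ] D) (πB : B →⋆ₐ[ℂ] D)
    (C : ℝ) (hC : 1 ≤ C) (ε : ℝ)
    (LA : A → ℝ≥0∞) (LB : B → ℝ≥0∞)
    (hLA : StronglyLeibniz C LA) (hLB : StronglyLeibniz C LB)
    (T : A × B → ℝ≥0∞)
    (hT : ∀ p : A × B,
      T p = max (max (LA p.1) (LB p.2)) (ENNReal.ofReal (ε⁻¹ * ‖πA p.1 - πB p.2‖))) :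
    StronglyLeibniz C T := by
  have hT' : T = fun p =>
      max (max ((LA ∘ StarAlgHom.fst ℂ A B) p) ((LB ∘ StarAlgHom.snd ℂ A B) p))
        (ENNReal.ofReal (ε⁻¹ * ‖πA p.1 - πB p.2‖)) := funext hT
  have hC₀ : 0 ≤ C := zero_le_one.trans hC
  rw [hT']
  exact ((hLA.comp hC₀ _).max (hLB.comp hC₀ _)).max
    (stronglyLeibniz_ofReal_mul_norm_sub πA πB hC ε⁻¹)

/-- if `L_A` and `L_B` are `C`-strongly Leibniz seminorms on the self-adjoint parts
of unital C*-algebras `A` and `B`, `π_A : A → D`, `π_B : B → D` are unital *-homomorphisms and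
`ε > 0`, then `T(a,b) = max { L_A a, L_B b, ε⁻¹ ‖π_A a - π_B b‖ }` is `C`-strongly Leibniz on
the direct sum `A ⊕ B` (with its maximum norm). -/
theorem stmt0 {A B D : Type*} [CStarAlgebra A] [CStarAlgebra B] [CStarAlgebra D]
    (πA : A →⋆ₐ[ℂ] D) (πB : B →⋆ₐ[ℂ] D)
    (C : ℝ) (hC : 1 ≤ C) (ε : ℝ) (hε : 0 < ε)
    (LA : A → ℝ≥0∞) (LB : B → ℝ≥0∞)
    (hLA : StronglyLeibniz C LA) (hLB : StronglyLeibniz C LB)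
    (T : A × B → ℝ≥0∞)
    (hT : ∀ p : A × B,
      T p = max (max (LA p.1) (LB p.2)) (ENNReal.ofReal (ε⁻¹ * ‖πA p.1 - πB p.2‖))) :
    StronglyLeibniz C T :=
  stmt0_general πA πB C hC ε LA LB hLA hLB T hT
end

section
/- Let C ≥ 1, let (D_n)_{n∈ℕ} be a sequence of unital C*-algebras, and for each n let T_n be a [0,∞]-valued seminorm on the self-adjoint part of D_n which is C-strongly Leibniz and satisfies T_n(1_{D_n}) = 0. Let S be the C*-algebra of bounded sequences (d_n) with d_n ∈ D_n, let I be the ideal of null sequences, let F = S/I with quotient map q : S → F, and for self-adjoint a ∈ F define Q(a) = inf{ sup_{n∈ℕ} T_n(d_n) : (d_n) ∈ S, each d_n self-adjoint, q((d_n)) = a } ∈ [0,∞]. Then Q is C-strongly Leibniz: for every self-adjoint invertible a ∈ F, Q(a⁻¹) ≤ C · ‖a⁻¹‖_F² · Q(a). -/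
open scoped ENNReal

noncomputable section

variable (D : ℕ → Type*) [∀ n, CStarAlgebra (D n)] [∀ n, Nontrivial (D n)]

/-- A `[0,∞]`-valued seminorm `L` on the self-adjoint part of a unital C*-algebra (or any unital
normed star ring) `A`, with norm function `NA`, is `C`-strongly Leibniz if for every self-adjoint
invertible `a ∈ A` one has `L(a⁻¹) ≤ C‖a⁻¹‖² L(a)`. -/
def StronglyLeibnizWith {A : Type*} [Ring A] [Star A] (NA : A → ℝ) (C : ℝ)
    (L : A → ℝ≥0∞) : Prop :=
  ∀ a : A, IsSelfAdjoint a → IsUnit a →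
    L (Ring.inverse a) ≤ ENNReal.ofReal (C * NA (Ring.inverse a) ^ 2) * L a

/-- The ring congruence on the C*-algebra `S = lp D ∞` of bounded sequences identifying two
sequences when their difference is a null sequence; its quotient is the quotient of `S` by the
closed two-sided ideal `I` of null sequences. -/
def nullRingCon : RingCon (lp D ∞) where
  r a b := Filter.Tendsto (fun n => ‖(a - b : lp D ∞) n‖) Filter.atTop (nhds 0)
  iseqv := by
    constructor
    · intro x; simpa using tendsto_const_nhds
    · intro x y h
      refine h.congr fun n => ?_
      have : ((y - x : lp D ∞) : ∀ n, D n) n = -(((x - y : lp D ∞) : ∀ n, D n) n) := by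
        simp
      rw [this, norm_neg]
    · intro x y z hxy hyz
      have h := hxy.add hyz
      rw [add_zero] at h
      refine squeeze_zero (fun n => norm_nonneg _) (fun n => ?_) h
      have : ((x - z : lp D ∞) : ∀ n, D n) n
          = ((x - y : lp D ∞) : ∀ n, D n) n + ((y - z : lp D ∞) : ∀ n, D n) n := by
        simp
      rw [this]
      exact norm_add_le _ _
  add' := by
    intro a b c d hab hcd
    have h := hab.add hcd
    rw [add_zero] at h
    refine squeeze_zero (fun n => norm_nonneg _) (fun n => ?_) h
    have : ((a + c - (b + d) : lp D ∞) : ∀ n, D n) n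
        = ((a - b : lp D ∞) : ∀ n, D n) n + ((c - d : lp D ∞) : ∀ n, D n) n := by
      simp; abel
    rw [this]
    exact norm_add_le _ _
  mul' := by
    intro a b c d hab hcd
    have h : Filter.Tendsto
        (fun n => ‖(a - b : lp D ∞) n‖ * ‖c‖ + ‖b‖ * ‖(c - d : lp D ∞) n‖)
        Filter.atTop (nhds 0) := by
      simpa using (hab.mul_const ‖c‖).add ((hcd.const_mul ‖b‖))
    refine squeeze_zero (fun n => norm_nonneg _) (fun n => ?_) h
    have key : ((a * c - b * d : lp D ∞) : ∀ n, D n) n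
        = ((a - b : lp D ∞) : ∀ n, D n) n * (c : ∀ n, D n) n
          + (b : ∀ n, D n) n * ((c - d : lp D ∞) : ∀ n, D n) n := by
      simp [sub_mul, mul_sub]
      rfl
    rw [key]
    refine (norm_add_le _ _).trans (add_le_add ?_ ?_)
    · exact (norm_mul_le _ _).trans <|
        mul_le_mul_of_nonneg_left (lp.norm_apply_le_norm (by norm_num) c n) (norm_nonneg _)
    · exact (norm_mul_le _ _).trans <|
        mul_le_mul_of_nonneg_right (lp.norm_apply_le_norm (by norm_num) b n) (norm_nonneg _)

/-- The quotient C*-algebra `F = S/I` of the bounded sequences by the null sequences. -/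
def NullQuotient := (nullRingCon D).Quotient

instance : Ring (NullQuotient D) :=
  inferInstanceAs (Ring (nullRingCon D).Quotient)

/-- The canonical surjection `q : S → F`. -/
def nullQuotientMk (d : lp D ∞) : NullQuotient D := (d : (nullRingCon D).Quotient)

/-- The star operation on the quotient `F = S/I`, induced by the coordinatewise star on `S`. -/
instance : Star (NullQuotient D) where
  star := Quotient.map' star <| by
    intro a b hab
    change Filter.Tendsto _ _ _ at hab ⊢
    refine hab.congr fun n => ?_
    have : ((star a - star b : lp D ∞) : ∀ n, D n) n = star (((a - b : lp D ∞) : ∀ n, D n) n) := by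
      rw [← star_sub]
      exact (lp.star_apply _ n)
    rw [this, norm_star]

/-- The quotient C*-norm on `F = S/I`: the infimum of the norms of representatives. -/
def nullQuotientNorm (x : NullQuotient D) : ℝ :=
  sInf {r : ℝ | ∃ d : lp D ∞, nullQuotientMk D d = x ∧ r = ‖d‖}

/-!
Let `a` be invertible in `F`, `d` a self-adjoint lift of `a` and `c` a lift of `a⁻¹` with
`‖c‖ < t`. Since `d c - 1` and `c d - 1` are null sequences, a Neumann series argument shows that
for `n ≥ M` each `d n` is invertible with `‖(d n)⁻¹‖ < t`. The sequence equal to `1` before `M` and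
to `(d n)⁻¹` from `M` on is then a self-adjoint lift of `a⁻¹`, and by `T n 1 = 0` and the strong
Leibniz property of each `T n` its supremum is at most `C t² sup_n T n (d n)`. Take the infimum
over `d`, then let `t` decrease to `‖a⁻¹‖_F`, which is positive because `F` is not zero.
-/

open Filter Topology

section BanachAlgebra

variable {R : Type*} [NormedRing R] [HasSummableGeomSeries R]

theorem isUnit_of_norm_one_sub_mul_lt_one {d c : R} (h₁ : ‖1 - d * c‖ < 1)
    (h₂ : ‖1 - c * d‖ < 1) : IsUnit d := by
  have hdc : IsUnit (d * c) := sub_sub_cancel 1 (d * c) ▸ isUnit_one_sub_of_norm_lt_one h₁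
  have hcd : IsUnit (c * d) := sub_sub_cancel 1 (c * d) ▸ isUnit_one_sub_of_norm_lt_one h₂
  have hright : d * (c * Ring.inverse (d * c)) = 1 := by
    rw [← mul_assoc, Ring.mul_inverse_cancel _ hdc]
  have hleft : Ring.inverse (c * d) * c * d = 1 := by
    rw [mul_assoc, Ring.inverse_mul_cancel _ hcd]
  exact isUnit_iff_exists.2 ⟨_, hright, left_inv_eq_right_inv hleft hright ▸ hleft⟩

theorem norm_ringInverse_le_of_norm_one_sub_mul_lt_one [NormOneClass R] {d c : R}
    (hd : IsUnit d) (h : ‖1 - d * c‖ < 1) :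
    ‖Ring.inverse d‖ ≤ ‖c‖ * (1 - ‖1 - d * c‖)⁻¹ := by
  have hdc : IsUnit (d * c) := sub_sub_cancel 1 (d * c) ▸ isUnit_one_sub_of_norm_lt_one h
  have hinv : Ring.inverse d = c * Ring.inverse (d * c) := by
    rw [← Ring.inverse_mul_cancel_left d (c * Ring.inverse (d * c)) hd, ← mul_assoc d c,
      Ring.mul_inverse_cancel _ hdc, mul_one]
  have hgeom : ‖Ring.inverse (d * c)‖ ≤ (1 - ‖1 - d * c‖)⁻¹ := by
    have := tsum_geometric_le_of_norm_lt_one _ h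
    rwa [norm_one, sub_self, zero_add, geom_series_eq_inverse _ h, sub_sub_cancel] at this
  calc ‖Ring.inverse d‖ ≤ ‖c‖ * ‖Ring.inverse (d * c)‖ := hinv ▸ norm_mul_le _ _
    _ ≤ ‖c‖ * (1 - ‖1 - d * c‖)⁻¹ := by gcongr

end BanachAlgebra

theorem eventually_isUnit_and_norm_ringInverse_lt {ι : Type*} {l : Filter ι} {E : ι → Type*}
    [∀ i, NormedRing (E i)] [∀ i, NormOneClass (E i)] [∀ i, HasSummableGeomSeries (E i)]
    {d c : ∀ i, E i} {K t : ℝ} (hc : ∀ i, ‖c i‖ ≤ K) (hKt : K < t)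
    (h₁ : Tendsto (fun i => ‖1 - d i * c i‖) l (𝓝 0))
    (h₂ : Tendsto (fun i => ‖1 - c i * d i‖) l (𝓝 0)) :
    ∀ᶠ i in l, IsUnit (d i) ∧ ‖Ring.inverse (d i)‖ < t := by
  have hbound : Tendsto (fun i => K * (1 - ‖1 - d i * c i‖)⁻¹) l (𝓝 K) := by
    simpa using (h₁.const_sub 1).inv₀ (by norm_num) |>.const_mul K
  filter_upwards [h₁.eventually (gt_mem_nhds one_pos), h₂.eventually (gt_mem_nhds one_pos),
    hbound.eventually (gt_mem_nhds hKt)] with i hi₁ hi₂ hit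
  have hunit := isUnit_of_norm_one_sub_mul_lt_one hi₁ hi₂
  refine ⟨hunit, ?_⟩
  calc ‖Ring.inverse (d i)‖ ≤ ‖c i‖ * (1 - ‖1 - d i * c i‖)⁻¹ :=
        norm_ringInverse_le_of_norm_one_sub_mul_lt_one hunit hi₁
    _ ≤ K * (1 - ‖1 - d i * c i‖)⁻¹ :=
        mul_le_mul_of_nonneg_right (hc i) (inv_nonneg.2 (sub_nonneg.2 hi₁.le))
    _ < t := hit

theorem ENNReal.le_ofReal_mul_of_forall_lt {g : ℝ → ℝ} {N : ℝ} {x y : ℝ≥0∞}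
    (hg : ContinuousAt g N) (hgN : 0 < g N)
    (h : ∀ t, N < t → x ≤ ENNReal.ofReal (g t) * y) : x ≤ ENNReal.ofReal (g N) * y := by
  have hlim : Tendsto (fun t => ENNReal.ofReal (g t) * y) (𝓝[>] N)
      (𝓝 (ENNReal.ofReal (g N) * y)) :=
    ENNReal.Tendsto.mul_const
      ((ENNReal.continuous_ofReal.tendsto _).comp (hg.mono_left nhdsWithin_le_nhds))
      (.inl (ENNReal.ofReal_pos.2 hgN).ne')
  exact ge_of_tendsto hlim (eventually_nhdsWithin_of_forall h)

section RingInverseFrom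

variable {E : ℕ → Type*}

def ringInverseFrom [∀ n, MonoidWithZero (E n)] (M : ℕ) (d : ∀ n, E n) : ∀ n, E n :=
  fun n => if n < M then 1 else Ring.inverse (d n)

theorem ringInverseFrom_of_lt [∀ n, MonoidWithZero (E n)] {M n : ℕ} (d : ∀ n, E n)
    (hn : n < M) : ringInverseFrom M d n = 1 :=
  if_pos hn

theorem ringInverseFrom_of_le [∀ n, MonoidWithZero (E n)] {M n : ℕ} (d : ∀ n, E n)
    (hn : M ≤ n) : ringInverseFrom M d n = Ring.inverse (d n) :=
  if_neg hn.not_gt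

theorem mul_ringInverseFrom_of_le [∀ n, MonoidWithZero (E n)] {M n : ℕ} {d : ∀ n, E n}
    (hn : M ≤ n) (hd : IsUnit (d n)) : d n * ringInverseFrom M d n = 1 := by
  rw [ringInverseFrom_of_le d hn, Ring.mul_inverse_cancel _ hd]

theorem isSelfAdjoint_ringInverseFrom [∀ n, Semiring (E n)] [∀ n, StarRing (E n)] {M n : ℕ}
    {d : ∀ n, E n} (hd : IsSelfAdjoint (d n)) : IsSelfAdjoint (ringInverseFrom M d n) := by
  rcases lt_or_ge n M with hn | hn
  · rw [ringInverseFrom_of_lt d hn]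
    exact .one _
  · rw [ringInverseFrom_of_le d hn]
    exact hd.ringInverse

theorem memℓp_ringInverseFrom [∀ n, NormedRing (E n)] [∀ n, NormOneClass (E n)] {M : ℕ}
    {d : ∀ n, E n} {t : ℝ} (hd : ∀ n ≥ M, ‖Ring.inverse (d n)‖ ≤ t) :
    Memℓp (ringInverseFrom M d) ∞ := by
  refine memℓp_infty ⟨max 1 t, Set.forall_mem_range.2 fun n => ?_⟩
  rcases lt_or_ge n M with hn | hn
  · simp [ringInverseFrom_of_lt d hn]
  · rw [ringInverseFrom_of_le d hn]
    exact le_max_of_le_right (hd n hn)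

end RingInverseFrom

section NullQuotient

variable {D}

def nullQuotientSeminorm (T : ∀ n, D n → ℝ≥0∞) (a : NullQuotient D) : ℝ≥0∞ :=
  ⨅ (d : {d : lp D ∞ // (∀ n, IsSelfAdjoint (d n)) ∧ nullQuotientMk D d = a}),
    ⨆ n, T n ((d : lp D ∞) n)

omit [∀ n, Nontrivial (D n)] in
theorem nullQuotientSeminorm_le_iSup (T : ∀ n, D n → ℝ≥0∞) {d : lp D ∞}
    (hd : ∀ n, IsSelfAdjoint (d n)) :
    nullQuotientSeminorm T (nullQuotientMk D d) ≤ ⨆ n, T n (d n) :=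
  iInf_le_of_le ⟨d, hd, rfl⟩ le_rfl

omit [∀ n, Nontrivial (D n)] in
theorem nullQuotientMk_surjective : Function.Surjective (nullQuotientMk D) :=
  fun x => Quotient.exists_rep x

theorem nullQuotientMk_mul (x y : lp D ∞) :
    nullQuotientMk D (x * y) = nullQuotientMk D x * nullQuotientMk D y :=
  RingCon.coe_mul _ _ _

theorem nullQuotientMk_one : nullQuotientMk D 1 = 1 := rfl

omit [∀ n, Nontrivial (D n)] in
theorem nullQuotientMk_eq_iff {x y : lp D ∞} :
    nullQuotientMk D x = nullQuotientMk D y ↔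
      Tendsto (fun n => ‖x n - y n‖) atTop (𝓝 0) :=
  RingCon.eq _

theorem tendsto_norm_one_sub_mul_of_nullQuotientMk_mul_eq_one {x y : lp D ∞}
    (h : nullQuotientMk D x * nullQuotientMk D y = 1) :
    Tendsto (fun n => ‖1 - x n * y n‖) atTop (𝓝 0) := by
  rw [← nullQuotientMk_mul, ← nullQuotientMk_one, nullQuotientMk_eq_iff] at h
  simpa [norm_sub_rev, lp.infty_coeFn_mul] using h

theorem nullQuotientMk_mul_eq_one_of_eventually {x y : lp D ∞}
    (h : ∀ᶠ n in atTop, x n * y n = 1) :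
    nullQuotientMk D x * nullQuotientMk D y = 1 := by
  rw [← nullQuotientMk_mul, ← nullQuotientMk_one, nullQuotientMk_eq_iff]
  refine tendsto_const_nhds.congr' (h.mono fun n hn => ?_)
  simp [lp.infty_coeFn_mul, hn]

omit [∀ n, Nontrivial (D n)] in
theorem exists_nullQuotientMk_eq_norm_lt {a : NullQuotient D} {t : ℝ}
    (h : nullQuotientNorm D a < t) : ∃ c, nullQuotientMk D c = a ∧ ‖c‖ < t := by
  obtain ⟨x, rfl⟩ := nullQuotientMk_surjective a
  obtain ⟨_, ⟨c, hc, rfl⟩, hct⟩ := exists_lt_of_csInf_lt (by exact ⟨‖x‖, x, rfl, rfl⟩) h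
  exact ⟨c, hc, hct⟩

theorem one_le_norm_mul_norm_of_nullQuotientMk_mul_eq_one {x y : lp D ∞}
    (h : nullQuotientMk D x * nullQuotientMk D y = 1) : 1 ≤ ‖x‖ * ‖y‖ := by
  have hlim := (tendsto_norm_one_sub_mul_of_nullQuotientMk_mul_eq_one h).add_const (‖x‖ * ‖y‖)
  rw [zero_add] at hlim
  refine ge_of_tendsto hlim (.of_forall fun n => ?_)
  calc (1 : ℝ) = ‖(1 : D n)‖ := norm_one.symm
    _ ≤ ‖1 - x n * y n‖ + ‖x n * y n‖ := norm_le_norm_sub_add _ _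
    _ ≤ ‖1 - x n * y n‖ + ‖x‖ * ‖y‖ := by
      gcongr
      exact (norm_mul_le _ _).trans (mul_le_mul (lp.norm_apply_le_norm ENNReal.top_ne_zero x n)
        (lp.norm_apply_le_norm ENNReal.top_ne_zero y n) (norm_nonneg _) (norm_nonneg _))

theorem nullQuotientNorm_pos_of_mul_eq_one {a b : NullQuotient D} (h : a * b = 1) :
    0 < nullQuotientNorm D a := by
  obtain ⟨x, rfl⟩ := nullQuotientMk_surjective a
  obtain ⟨y, rfl⟩ := nullQuotientMk_surjective b
  have hy : 0 < ‖y‖ := pos_of_mul_pos_right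
    (one_pos.trans_le (one_le_norm_mul_norm_of_nullQuotientMk_mul_eq_one h)) (norm_nonneg x)
  refine (inv_pos.2 hy).trans_le (le_csInf ⟨‖x‖, x, rfl, rfl⟩ ?_)
  rintro r ⟨x', hx', rfl⟩
  exact (inv_le_iff_one_le_mul₀ hy).2 (one_le_norm_mul_norm_of_nullQuotientMk_mul_eq_one (hx' ▸ h))

variable {C : ℝ} {T : ∀ n, D n → ℝ≥0∞}

theorem nullQuotientSeminorm_ringInverse_le_mul_iSup (hC : 0 ≤ C)
    (hT : ∀ n, StronglyLeibnizWith (fun x => ‖x‖) C (T n)) (hT1 : ∀ n, T n 1 = 0)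
    {a : NullQuotient D} (ha : IsUnit a) {c d : lp D ∞}
    (hc : nullQuotientMk D c = Ring.inverse a) (hd : ∀ n, IsSelfAdjoint (d n))
    (hda : nullQuotientMk D d = a) {t : ℝ} (hct : ‖c‖ < t) :
    nullQuotientSeminorm T (Ring.inverse a) ≤ ENNReal.ofReal (C * t ^ 2) * ⨆ n, T n (d n) := by
  have h₁ := tendsto_norm_one_sub_mul_of_nullQuotientMk_mul_eq_one (x := d) (y := c)
    (by rw [hda, hc, Ring.mul_inverse_cancel _ ha])
  have h₂ := tendsto_norm_one_sub_mul_of_nullQuotientMk_mul_eq_one (x := c) (y := d)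
    (by rw [hc, hda, Ring.inverse_mul_cancel _ ha])
  obtain ⟨M, hM⟩ := eventually_atTop.1 <| eventually_isUnit_and_norm_ringInverse_lt
    (lp.norm_apply_le_norm ENNReal.top_ne_zero c) hct h₁ h₂
  let f : lp D ∞ := ⟨ringInverseFrom M d, memℓp_ringInverseFrom fun n hn => (hM n hn).2.le⟩
  have hfa : nullQuotientMk D f = Ring.inverse a := by
    have hinv : a * nullQuotientMk D f = 1 := hda ▸ nullQuotientMk_mul_eq_one_of_eventually
      (eventually_atTop.2 ⟨M, fun n hn => mul_ringInverseFrom_of_le hn (hM n hn).1⟩)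
    rw [← Ring.inverse_mul_cancel_left _ (nullQuotientMk D f) ha, hinv, mul_one]
  calc nullQuotientSeminorm T (Ring.inverse a) ≤ ⨆ n, T n (f n) :=
        hfa ▸ nullQuotientSeminorm_le_iSup T fun n => isSelfAdjoint_ringInverseFrom (hd n)
    _ ≤ _ := iSup_le fun n => ?_
  rcases lt_or_ge n M with hn | hn
  · simp [f, ringInverseFrom_of_lt d hn, hT1]
  · calc T n (f n) = T n (Ring.inverse (d n)) := congrArg (T n) (ringInverseFrom_of_le d hn)
      _ ≤ ENNReal.ofReal (C * ‖Ring.inverse (d n)‖ ^ 2) * T n (d n) :=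
        hT n (d n) (hd n) (hM n hn).1
      _ ≤ ENNReal.ofReal (C * t ^ 2) * ⨆ n, T n (d n) := by
        gcongr
        · exact (hM n hn).2.le
        · exact le_iSup (fun n => T n (d n)) n

theorem nullQuotientSeminorm_ringInverse_le (hC : 0 < C)
    (hT : ∀ n, StronglyLeibnizWith (fun x => ‖x‖) C (T n)) (hT1 : ∀ n, T n 1 = 0)
    {a : NullQuotient D} (ha : IsUnit a) {t : ℝ} (ht : nullQuotientNorm D (Ring.inverse a) < t) :
    nullQuotientSeminorm T (Ring.inverse a) ≤
      ENNReal.ofReal (C * t ^ 2) * nullQuotientSeminorm T a := by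
  obtain ⟨c, hc, hct⟩ := exists_nullQuotientMk_eq_norm_lt ht
  have ht₀ : 0 < t := (norm_nonneg c).trans_lt hct
  rw [nullQuotientSeminorm.eq_1 T a,
    ENNReal.mul_iInf_of_ne (ENNReal.ofReal_pos.2 (by positivity)).ne' ENNReal.ofReal_ne_top]
  exact le_iInf fun ⟨d, hd, hda⟩ =>
    nullQuotientSeminorm_ringInverse_le_mul_iSup hC.le hT hT1 ha hc hd hda hct

end NullQuotient

/-- let each `T n` be a `C`-strongly Leibniz `[0,∞]`-valued seminorm on the
self-adjoint part of the unital C*-algebra `D n` with `T n 1 = 0`.  On the quotient `F = S/I`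
of the C*-algebra `S = lp D ∞` of bounded sequences by the ideal of null sequences, define
`Q(a) = inf { sup_n T n (d n) : (d n) ∈ S, each d n self-adjoint, q((d n)) = a }`.
Then `Q` is `C`-strongly Leibniz: for every self-adjoint invertible `a ∈ F`,
`Q(a⁻¹) ≤ C ‖a⁻¹‖_F² Q(a)`. -/
theorem stmt2 (C : ℝ) (hC : 1 ≤ C) (T : ∀ n, D n → ℝ≥0∞)
    (hT : ∀ n, StronglyLeibnizWith (fun x => ‖x‖) C (T n))
    (hT1 : ∀ n, T n 1 = 0)
    (Q : NullQuotient D → ℝ≥0∞)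
    (hQ : ∀ a : NullQuotient D,
      Q a = ⨅ (d : {d : lp D ∞ // (∀ n, IsSelfAdjoint (d n)) ∧ nullQuotientMk D d = a}),
        ⨆ n, T n ((d : lp D ∞) n)) :
    StronglyLeibnizWith (nullQuotientNorm D) C Q := by
  obtain rfl : Q = nullQuotientSeminorm T := funext hQ
  intro a _ ha
  have hC₀ : 0 < C := by linarith
  have hN : 0 < nullQuotientNorm D (Ring.inverse a) :=
    nullQuotientNorm_pos_of_mul_eq_one (Ring.inverse_mul_cancel a ha)
  exact ENNReal.le_ofReal_mul_of_forall_lt (g := fun t => C * t ^ 2) (by fun_prop) (by positivity)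
    fun t ht => nullQuotientSeminorm_ringInverse_le hC₀ hT hT1 ha ht

end
end

section
/- Let A be a unital C*-algebra and let B ⊆ C be unital C*-subalgebras of A. Let E_B : A → B and E_C : A → C be conditional expectations such that E_B ∘ E_C = E_B, such that E_B and E_C are *-preserving (E(a*) = E(a)* for all a), such that E_B is positive (it maps positive elements of A to positive elements), and such that E_C satisfies the Schwarz inequality E_C(a)* E_C(a) ≤ E_C(a*a) for all a ∈ A. Then for every a ∈ A: ‖E_B( (E_C(a) − E_B(a))* (E_C(a) − E_B(a)) )‖_A ≤ ‖E_B( (a − E_B(a))* (a − E_B(a)) )‖_A. -/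
/-! Since `E_B a ∈ B ⊆ C` is fixed by `E_C`, we have `E_C a - E_B a = E_C x` for `x = a - E_B a`.
The Schwarz inequality `E_C(x)* E_C(x) ≤ E_C(x* x)`, pushed through the positive map `E_B` with
`E_B ∘ E_C = E_B`, gives an order inequality between positive elements, and the C*-norm is
monotone on those. -/

section PositiveMap

variable {R A : Type*} [CommSemiring R] [NonUnitalRing A] [StarRing A] [PartialOrder A]
  [StarOrderedRing A] [Module R A]

theorem LinearMap.map_le_map_of_map_nonneg (E : A →ₗ[R] A) (hpos : ∀ a, 0 ≤ a → 0 ≤ E a)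
    {x y : A} (hxy : x ≤ y) : E x ≤ E y := by
  have := hpos _ (sub_nonneg.mpr hxy)
  rwa [map_sub, sub_nonneg] at this

theorem LinearMap.map_star_mul_self_le_of_comp_eq (E F : A →ₗ[R] A)
    (hpos : ∀ a, 0 ≤ a → 0 ≤ E a) (hcomp : ∀ a, E (F a) = E a)
    (hschwarz : ∀ a, star (F a) * F a ≤ F (star a * a)) (x : A) :
    E (star (F x) * F x) ≤ E (star x * x) :=
  hcomp (star x * x) ▸ E.map_le_map_of_map_nonneg hpos (hschwarz x)

end PositiveMap

theorem stmt5_general {A : Type*} [CStarAlgebra A] [PartialOrder A] [StarOrderedRing A]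
    (B C : StarSubalgebra ℂ A) (hBC : B ≤ C)
    (EB EC : A →ₗ[ℂ] A)
    -- `E_B` is a conditional expectation onto `B`
    (hrangeB : ∀ a : A, EB a ∈ B)
    -- `E_C` is a conditional expectation onto `C`
    (hfixC : ∀ c ∈ C, EC c = c)
    -- additional hypotheses
    (hcomp : ∀ a : A, EB (EC a) = EB a)
    (hposB : ∀ a : A, 0 ≤ a → 0 ≤ EB a)
    (hschwarzC : ∀ a : A, star (EC a) * EC a ≤ EC (star a * a))
    (a : A) :
    ‖EB (star (EC a - EB a) * (EC a - EB a))‖ ≤ ‖EB (star (a - EB a) * (a - EB a))‖ := by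
  have hEC : EC (a - EB a) = EC a - EB a := by
    rw [map_sub, hfixC _ (hBC (hrangeB a))]
  refine CStarAlgebra.norm_le_norm_of_nonneg_of_le (hposB _ (star_mul_self_nonneg _)) ?_
  exact hEC ▸ EB.map_star_mul_self_le_of_comp_eq EC hposB hcomp hschwarzC (a - EB a)

/-- let `A` be a unital C*-algebra with unital C*-subalgebras `B ⊆ C`, and let
`E_B : A → B`, `E_C : A → C` be conditional expectations with `E_B ∘ E_C = E_B`, both
*-preserving, `E_B` positive, and `E_C` satisfying the Schwarz inequality
`E_C(a)* E_C(a) ≤ E_C(a* a)`.  Then for every `a ∈ A`: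
`‖E_B((E_C a − E_B a)* (E_C a − E_B a))‖ ≤ ‖E_B((a − E_B a)* (a − E_B a))‖`. -/
theorem stmt5 {A : Type*} [CStarAlgebra A] [PartialOrder A] [StarOrderedRing A]
    (B C : StarSubalgebra ℂ A) (hBC : B ≤ C)
    (EB EC : A →ₗ[ℂ] A)
    -- `E_B` is a conditional expectation onto `B`
    (hrangeB : ∀ a : A, EB a ∈ B)
    (hfixB : ∀ b ∈ B, EB b = b)
    (hcontrB : ∀ a : A, ‖EB a‖ ≤ ‖a‖)
    (hmodB : ∀ a : A, ∀ b ∈ B, ∀ b' ∈ B, EB (b * a * b') = b * EB a * b')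
    -- `E_C` is a conditional expectation onto `C`
    (hrangeC : ∀ a : A, EC a ∈ C)
    (hfixC : ∀ c ∈ C, EC c = c)
    (hcontrC : ∀ a : A, ‖EC a‖ ≤ ‖a‖)
    (hmodC : ∀ a : A, ∀ c ∈ C, ∀ c' ∈ C, EC (c * a * c') = c * EC a * c')
    -- additional hypotheses
    (hcomp : ∀ a : A, EB (EC a) = EB a)
    (hstarB : ∀ a : A, EB (star a) = star (EB a))
    (hstarC : ∀ a : A, EC (star a) = star (EC a))
    (hposB : ∀ a : A, 0 ≤ a → 0 ≤ EB a)
    (hschwarzC : ∀ a : A, star (EC a) * EC a ≤ EC (star a * a))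
    (a : A) :
    ‖EB (star (EC a - EB a) * (EC a - EB a))‖ ≤ ‖EB (star (a - EB a) * (a - EB a))‖ :=
  stmt5_general B C hBC EB EC hrangeB hfixC hcomp hposB hschwarzC a
end

section
/- Let N, M ∈ ℕ∖{0}, let n_1,…,n_N, m_1,…,m_M ∈ ℕ∖{0}, let A = ⊕_{k=1}^N M_{n_k}(ℂ) and B = ⊕_{k=1}^M M_{m_k}(ℂ) be the direct sum C*-algebras, and let α : B → A be a unital *-monomorphism. For each n ∈ ℕ ∪ {∞}, let v^n ∈ (0,1)^N with Σ_{k=1}^N v^n_k = 1, let τ_{v^n}(a) = Σ_{k=1}^N (v^n_k / n_k) Tr(a_k) for a = (a_1,…,a_N) ∈ A, and let E^n : A → α(B) be the unique conditional expectation onto α(B) satisfying τ_{v^n} ∘ E^n = τ_{v^n}. If (v^n)_{n∈ℕ} converges coordinatewise to v^∞, then the Frobenius–Rieffel norms a ↦ √‖E^n(a*a)‖_A converge, as n → ∞, to a ↦ √‖E^∞(a*a)‖_A uniformly on every compact subset of (A, ‖·‖_A); in particular they converge pointwise on A. -/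
open scoped Matrix.Norms.L2Operator

/-- The direct sum C*-algebra `⊕_{k=1}^N M_{n_k}(ℂ)` (with the maximum of the operator norms). -/
abbrev MatDirectSum (N : ℕ) (n : Fin N → ℕ) : Type :=
  ∀ k : Fin N, Matrix (Fin (n k)) (Fin (n k)) ℂ

/-- The tracial functional `τ_v(a) = Σ_k (v_k / n_k) Tr(a_k)` on `⊕_k M_{n_k}(ℂ)`. -/
noncomputable def matTrace {N : ℕ} {n : Fin N → ℕ} (v : Fin N → ℝ) (a : MatDirectSum N n) : ℂ :=
  ∑ k : Fin N, ((v k : ℂ) / (n k : ℂ)) * Matrix.trace (a k)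

/-!
The `τ_v`-preserving conditional expectation sends `x` to its orthogonal projection onto `α(B)` for
the inner product `τ_v(a⋆ b)`. That projection is pinned down by the equations
`τ_v(α(b) y) = τ_v(α(b) x)`, `y ∈ α(B)`, which depend continuously on `v` and have a unique
solution once every `v_k > 0`, because `τ_v` is then faithful. The `E^p` are contractions, so every
cluster point of `E^p x` solves the limiting equations, whence `E^p → E^∞` pointwise. In finite
dimension this is convergence in operator norm, and `(T, a) ↦ √‖T (a⋆ a)‖` is jointly continuous,
which gives uniform convergence on compact sets.
-/

open Filter Topology Matrix

theorem tendsto_toContinuousLinearMap_of_tendsto_apply {𝕜 E F ι : Type*}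
    [NontriviallyNormedField 𝕜] [CompleteSpace 𝕜] [NormedAddCommGroup E] [NormedSpace 𝕜 E]
    [FiniteDimensional 𝕜 E] [NormedAddCommGroup F] [NormedSpace 𝕜 F] {l : Filter ι}
    {T : ι → E →ₗ[𝕜] F} {T₀ : E →ₗ[𝕜] F} (h : ∀ x, Tendsto (fun i => T i x) l (𝓝 (T₀ x))) :
    Tendsto (fun i => LinearMap.toContinuousLinearMap (T i)) l
      (𝓝 (LinearMap.toContinuousLinearMap T₀)) := by
  set b := Module.finBasis 𝕜 E
  obtain ⟨C, -, hC⟩ := b.exists_opNorm_le (F := F)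
  have hb : Tendsto (fun i => ∑ j, ‖T i (b j) - T₀ (b j)‖) l (𝓝 0) := by
    simpa using tendsto_finsetSum _ fun j _ => tendsto_iff_norm_sub_tendsto_zero.mp (h (b j))
  rw [tendsto_iff_norm_sub_tendsto_zero]
  refine squeeze_zero (fun _ => norm_nonneg _)
    (fun i => hC (M := ∑ j, ‖T i (b j) - T₀ (b j)‖) (by positivity) fun j => ?_)
    (by simpa using hb.const_mul C)
  exact Finset.single_le_sum (f := fun j => ‖T i (b j) - T₀ (b j)‖)
    (fun _ _ => norm_nonneg _) (Finset.mem_univ j)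

theorem TendstoUniformlyOn.of_continuous_uncurry {X Y Z ι : Type*} [TopologicalSpace X]
    [TopologicalSpace Y] [UniformSpace Z] {f : X → Y → Z} (hf : Continuous (Function.uncurry f))
    {l : Filter ι} {g : ι → X} {x : X} (hg : Tendsto g l (𝓝 x)) {K : Set Y} (hK : IsCompact K) :
    TendstoUniformlyOn (fun i => f (g i)) (f x) l K :=
  let F : C(X, C(Y, Z)) := ContinuousMap.curry ⟨_, hf⟩
  ContinuousMap.tendsto_iff_forall_isCompact_tendstoUniformlyOn.mp
    ((F.continuous.tendsto x).comp hg) K hK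

section

variable {N : ℕ} {n : Fin N → ℕ}

theorem matTrace_sub (v : Fin N → ℝ) (a b : MatDirectSum N n) :
    matTrace v (a - b) = matTrace v a - matTrace v b := by
  simp only [matTrace, ← Finset.sum_sub_distrib, Pi.sub_apply, Matrix.trace_sub, mul_sub]

theorem continuous_matTrace :
    Continuous (Function.uncurry (matTrace : _ → MatDirectSum N n → ℂ)) := by
  unfold matTrace
  fun_prop

theorem Filter.Tendsto.matTrace {ι : Type*} {l : Filter ι} {w : ι → Fin N → ℝ} {v : Fin N → ℝ}
    {z : ι → MatDirectSum N n} {z₀ : MatDirectSum N n} (hw : Tendsto w l (𝓝 v))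
    (hz : Tendsto z l (𝓝 z₀)) : Tendsto (fun i => matTrace (w i) (z i)) l (𝓝 (matTrace v z₀)) :=
  (continuous_matTrace.tendsto (v, z₀)).comp (f := fun i => (w i, z i)) (hw.prodMk_nhds hz)

open scoped ComplexOrder in
theorem eq_zero_of_matTrace_star_mul_self_eq_zero {v : Fin N → ℝ} (hv : ∀ k, 0 < v k)
    {y : MatDirectSum N n} (h : matTrace v (star y * y) = 0) : y = 0 := by
  have hcoeff : ∀ k, (0 : ℂ) ≤ (v k : ℂ) / (n k : ℂ) := fun k => by
    rw [← Complex.ofReal_natCast, ← Complex.ofReal_div, Complex.zero_le_real]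
    exact div_nonneg (hv k).le (Nat.cast_nonneg _)
  have hterm : ∀ k ∈ Finset.univ,
      0 ≤ (v k : ℂ) / (n k : ℂ) * ((y k)ᴴ * y k).trace := fun k _ =>
    mul_nonneg (hcoeff k) (Matrix.posSemidef_conjTranspose_mul_self _).trace_nonneg
  funext k
  rcases Nat.eq_zero_or_pos (n k) with hempty | hpos
  · ext i
    exact absurd i.isLt (by omega)
  · have hcoeff_ne : (v k : ℂ) / (n k : ℂ) ≠ 0 := by
      simp only [ne_eq, div_eq_zero_iff, Complex.ofReal_eq_zero, Nat.cast_eq_zero, not_or]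
      exact ⟨(hv k).ne', hpos.ne'⟩
    exact Matrix.trace_conjTranspose_mul_self_eq_zero_iff.mp <| (mul_eq_zero.mp <|
      (Finset.sum_eq_zero_iff_of_nonneg hterm).mp h k (Finset.mem_univ k)).resolve_left hcoeff_ne

variable {M : ℕ} {m : Fin M → ℕ}

/-- `y` is the orthogonal projection of `x` onto `α(B)` for the inner product
`⟨a, b⟩ = τ_v(a⋆ b)`. -/
def IsTraceProjection (α : MatDirectSum M m →⋆ₐ[ℂ] MatDirectSum N n) (v : Fin N → ℝ)
    (x y : MatDirectSum N n) : Prop :=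
  y ∈ Set.range α ∧ ∀ b, matTrace v (α b * y) = matTrace v (α b * x)

variable {α : MatDirectSum M m →⋆ₐ[ℂ] MatDirectSum N n} {v : Fin N → ℝ}
  {x y : MatDirectSum N n}

theorem isTraceProjection_apply {E : MatDirectSum N n →ₗ[ℂ] MatDirectSum N n}
    (hrange : ∀ a, ∃ b, E a = α b) (hmod : ∀ a b b', E (α b * a * α b') = α b * E a * α b')
    (htrace : ∀ a, matTrace v (E a) = matTrace v a) (x : MatDirectSum N n) :
    IsTraceProjection α v x (E x) := by
  refine ⟨(hrange x).imp fun _ hb => hb.symm, fun b => ?_⟩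
  have hleft : E (α b * x) = α b * E x := by simpa using hmod x b 1
  rw [← hleft, htrace]

theorem IsTraceProjection.unique (hv : ∀ k, 0 < v k) {y' : MatDirectSum N n}
    (hy : IsTraceProjection α v x y) (hy' : IsTraceProjection α v x y') : y = y' := by
  obtain ⟨⟨c, rfl⟩, hc⟩ := hy
  obtain ⟨⟨c', rfl⟩, hc'⟩ := hy'
  have hzero : α (c - c') = 0 := eq_zero_of_matTrace_star_mul_self_eq_zero hv <| by
    rw [← map_star, map_sub α c c', mul_sub, matTrace_sub, hc, hc', sub_self]
  rwa [map_sub, sub_eq_zero] at hzero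

theorem IsTraceProjection.of_tendsto {ι : Type*} {l : Filter ι} [l.NeBot] {w : ι → Fin N → ℝ}
    {y : ι → MatDirectSum N n} {y₀ : MatDirectSum N n} (hw : Tendsto w l (𝓝 v))
    (hy : Tendsto y l (𝓝 y₀)) (h : ∀ i, IsTraceProjection α (w i) x (y i)) :
    IsTraceProjection α v x y₀ := by
  have hclosed : IsClosed (Set.range α) := by
    have := (LinearMap.range α.toLinearMap).closed_of_finiteDimensional
    rwa [LinearMap.coe_range] at this
  refine ⟨hclosed.mem_of_tendsto hy (Eventually.of_forall fun i => (h i).1), fun b => ?_⟩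
  refine tendsto_nhds_unique (hw.matTrace (hy.const_mul (α b))) ?_
  simpa only [(h _).2 b] using hw.matTrace (tendsto_const_nhds (x := α b * x))

theorem tendsto_of_isTraceProjection (hv : ∀ k, 0 < v k) {w : ℕ → Fin N → ℝ}
    (hw : Tendsto w atTop (𝓝 v)) {y : ℕ → MatDirectSum N n} {y₀ : MatDirectSum N n} {C : ℝ}
    (hbdd : ∀ p, ‖y p‖ ≤ C) (hy : ∀ p, IsTraceProjection α (w p) x (y p))
    (hy₀ : IsTraceProjection α v x y₀) : Tendsto y atTop (𝓝 y₀) := by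
  refine (isCompact_closedBall 0 C).tendsto_nhds_of_unique_mapClusterPt
    (Eventually.of_forall fun p => mem_closedBall_zero_iff.mpr (hbdd p)) fun z _ hz => ?_
  obtain ⟨ψ, hψ, hyψ⟩ := hz.tendsto_subseq
  exact (IsTraceProjection.of_tendsto (hw.comp hψ.tendsto_atTop) hyψ fun p => hy (ψ p)).unique
    hv hy₀

end

theorem stmt8_general (N M : ℕ)
    (n : Fin N → ℕ) (m : Fin M → ℕ)
    (α : MatDirectSum M m →⋆ₐ[ℂ] MatDirectSum N n)
    (v : ℕ → Fin N → ℝ) (vinf : Fin N → ℝ)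
    (hvinf : ∀ k, vinf k ∈ Set.Ioo (0 : ℝ) 1)
    (E : ℕ → (MatDirectSum N n →ₗ[ℂ] MatDirectSum N n))
    (Einf : MatDirectSum N n →ₗ[ℂ] MatDirectSum N n)
    -- each `E p` is a conditional expectation onto `α(B)` preserving `τ_{v^p}`
    (hrange : ∀ p a, ∃ b, E p a = α b)
    (hcontr : ∀ p a, ‖E p a‖ ≤ ‖a‖)
    (hmod : ∀ p a b b', E p (α b * a * α b') = α b * E p a * α b')
    (htrace : ∀ p a, matTrace (v p) (E p a) = matTrace (v p) a)
    -- `E ∞` is a conditional expectation onto `α(B)` preserving `τ_{v^∞}`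
    (hrangeinf : ∀ a, ∃ b, Einf a = α b)
    (hmodinf : ∀ a b b', Einf (α b * a * α b') = α b * Einf a * α b')
    (htraceinf : ∀ a, matTrace vinf (Einf a) = matTrace vinf a)
    -- coordinatewise convergence of `v^p` to `v^∞`
    (hconv : ∀ k, Filter.Tendsto (fun p => v p k) Filter.atTop (nhds (vinf k))) :
    (∀ K : Set (MatDirectSum N n), IsCompact K →
      TendstoUniformlyOn (fun p a => Real.sqrt ‖E p (star a * a)‖)
        (fun a => Real.sqrt ‖Einf (star a * a)‖) Filter.atTop K) ∧
    (∀ a : MatDirectSum N n,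
      Filter.Tendsto (fun p => Real.sqrt ‖E p (star a * a)‖) Filter.atTop
        (nhds (Real.sqrt ‖Einf (star a * a)‖))) := by
  have hE : ∀ x, Tendsto (fun p => E p x) atTop (𝓝 (Einf x)) := fun x =>
    tendsto_of_isTraceProjection (fun k => (hvinf k).1) (tendsto_pi_nhds.mpr hconv)
      (fun p => hcontr p x) (fun p => isTraceProjection_apply (hrange p) (hmod p) (htrace p) x)
      (isTraceProjection_apply hrangeinf hmodinf htraceinf x)
  have hunif : ∀ K, IsCompact K → TendstoUniformlyOn (fun p a => Real.sqrt ‖E p (star a * a)‖)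
      (fun a => Real.sqrt ‖Einf (star a * a)‖) atTop K := fun K hK =>
    TendstoUniformlyOn.of_continuous_uncurry
      (f := fun (T : MatDirectSum N n →L[ℂ] MatDirectSum N n) a => Real.sqrt ‖T (star a * a)‖)
      (by fun_prop) (tendsto_toContinuousLinearMap_of_tendsto_apply hE) hK
  exact ⟨hunif, fun a => (hunif {a} isCompact_singleton).tendsto_at rfl⟩

/-- let `A = ⊕_{k=1}^N M_{n_k}(ℂ)`, `B = ⊕_{k=1}^M M_{m_k}(ℂ)`, and let
`α : B → A` be a unital *-monomorphism.  For each `p ∈ ℕ ∪ {∞}` let `v^p ∈ (0,1)^N` with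
`Σ_k v^p_k = 1`, let `τ_{v^p}(a) = Σ_k (v^p_k/n_k) Tr(a_k)`, and let `E^p : A → α(B)` be the
(unique) conditional expectation onto `α(B)` with `τ_{v^p} ∘ E^p = τ_{v^p}`.  If `v^p → v^∞`
coordinatewise then the Frobenius–Rieffel norms `a ↦ √‖E^p(a*a)‖` converge to
`a ↦ √‖E^∞(a*a)‖` uniformly on every compact subset of `A`, and in particular pointwise. -/
theorem stmt8 (N M : ℕ) (hN : 0 < N) (hM : 0 < M)
    (n : Fin N → ℕ) (hn : ∀ k, 0 < n k) (m : Fin M → ℕ) (hm : ∀ k, 0 < m k)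
    (α : MatDirectSum M m →⋆ₐ[ℂ] MatDirectSum N n) (hα : Function.Injective α)
    (v : ℕ → Fin N → ℝ) (vinf : Fin N → ℝ)
    (hv : ∀ p k, v p k ∈ Set.Ioo (0 : ℝ) 1) (hvinf : ∀ k, vinf k ∈ Set.Ioo (0 : ℝ) 1)
    (hvsum : ∀ p, ∑ k, v p k = 1) (hvinfsum : ∑ k, vinf k = 1)
    (E : ℕ → (MatDirectSum N n →ₗ[ℂ] MatDirectSum N n))
    (Einf : MatDirectSum N n →ₗ[ℂ] MatDirectSum N n)
    -- each `E p` is a conditional expectation onto `α(B)` preserving `τ_{v^p}`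
    (hrange : ∀ p a, ∃ b, E p a = α b)
    (hfix : ∀ p b, E p (α b) = α b)
    (hcontr : ∀ p a, ‖E p a‖ ≤ ‖a‖)
    (hmod : ∀ p a b b', E p (α b * a * α b') = α b * E p a * α b')
    (htrace : ∀ p a, matTrace (v p) (E p a) = matTrace (v p) a)
    -- `E ∞` is a conditional expectation onto `α(B)` preserving `τ_{v^∞}`
    (hrangeinf : ∀ a, ∃ b, Einf a = α b)
    (hfixinf : ∀ b, Einf (α b) = α b)
    (hcontrinf : ∀ a, ‖Einf a‖ ≤ ‖a‖)
    (hmodinf : ∀ a b b', Einf (α b * a * α b') = α b * Einf a * α b')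
    (htraceinf : ∀ a, matTrace vinf (Einf a) = matTrace vinf a)
    -- coordinatewise convergence of `v^p` to `v^∞`
    (hconv : ∀ k, Filter.Tendsto (fun p => v p k) Filter.atTop (nhds (vinf k))) :
    (∀ K : Set (MatDirectSum N n), IsCompact K →
      TendstoUniformlyOn (fun p a => Real.sqrt ‖E p (star a * a)‖)
        (fun a => Real.sqrt ‖Einf (star a * a)‖) Filter.atTop K) ∧
    (∀ a : MatDirectSum N n,
      Filter.Tendsto (fun p => Real.sqrt ‖E p (star a * a)‖) Filter.atTop
        (nhds (Real.sqrt ‖Einf (star a * a)‖))) :=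
  stmt8_general N M n m α v vinf hvinf E Einf hrange hcontr hmod htrace hrangeinf hmodinf htraceinf
    hconv
end
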